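/- arXiv:1009.1593 — 4 statements merged into one kernel-verified Lean document; each statement's English description precedes it below -/
import Mathlib

section
/- For fixed forgetting time τ_f > 0 and fixed mass m > 0, the expectation value E(ρ) = (4m²/(3τ_f)) ∫₀^∞ cosh(ξ)·sinh(ξ)·exp(−ρπτ_f⁴·g(ξ)) dξ tends to 0 as the sprinkling density ρ tends to infinity. (Lemma 3.1: if the discreteness scale d_pl → 0 with the forgetting time fixed, the momentum diffusion expectation ⟨Δp Δp /(2Δτ)⟩ tends to 0.) -/
open MeasureTheory Filter Real

/-- The function `g(ξ) = sinh(2ξ)/4 − ξ/2` appearing in the swerves expectation value. -/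
noncomputable def swerveG (ξ : ℝ) : ℝ := Real.sinh (2 * ξ) / 4 - ξ / 2

open Topology Set Asymptotics

/-!
For every `ξ > 0` the integrand is `cosh ξ sinh ξ · exp(-ρ c g(ξ))` with `c = π τf⁴ > 0` and
`g(ξ) > 0`, so it tends to `0` pointwise as `ρ → ∞`. For `ρ ≥ 1` it is dominated by its value at
`ρ = 1`, which is integrable on `(0, ∞)` because `g` grows quadratically while `cosh ξ sinh ξ` only
grows like `e^{2ξ}`; dominated convergence concludes.
-/

theorem tendsto_integral_mul_exp_neg_mul_atTop {α : Type*} [MeasurableSpace α] {μ : Measure α}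
    {F G : α → ℝ} (hF : AEStronglyMeasurable F μ) (hG : AEStronglyMeasurable G μ)
    (hG_pos : ∀ᵐ x ∂μ, 0 < G x) (hint : Integrable (fun x => F x * exp (-G x)) μ) :
    Tendsto (fun ρ : ℝ => ∫ x, F x * exp (-(ρ * G x)) ∂μ) atTop (𝓝 0) := by
  have h_meas : ∀ ρ : ℝ, AEStronglyMeasurable (fun x => F x * exp (-(ρ * G x))) μ := fun ρ =>
    hF.mul (continuous_exp.comp_aestronglyMeasurable (hG.const_mul ρ).neg)
  have h_bound : ∀ᶠ ρ : ℝ in atTop, ∀ᵐ x ∂μ,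
      ‖F x * exp (-(ρ * G x))‖ ≤ ‖F x * exp (-G x)‖ := by
    filter_upwards [eventually_ge_atTop 1] with ρ hρ
    filter_upwards [hG_pos] with x hx
    simp only [norm_mul, norm_of_nonneg (exp_pos _).le]
    gcongr
    nlinarith
  have h_lim : ∀ᵐ x ∂μ, Tendsto (fun ρ : ℝ => F x * exp (-(ρ * G x))) atTop (𝓝 0) := by
    filter_upwards [hG_pos] with x hx
    have h_exponent : Tendsto (fun ρ : ℝ => -(ρ * G x)) atTop atBot :=
      tendsto_neg_atTop_atBot.comp (tendsto_id.atTop_mul_const hx)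
    simpa using (tendsto_exp_atBot.comp h_exponent).const_mul (F x)
  simpa using tendsto_integral_filter_of_dominated_convergence _
    (Eventually.of_forall h_meas) h_bound hint.norm h_lim

@[fun_prop]
lemma continuous_swerveG : Continuous swerveG := by
  unfold swerveG
  fun_prop

lemma swerveG_pos {ξ : ℝ} (hξ : 0 < ξ) : 0 < swerveG ξ := by
  have h : 2 * ξ < sinh (2 * ξ) := self_lt_sinh_iff.2 (by linarith)
  unfold swerveG
  linarith

lemma sq_sub_self_div_four_le_swerveG {ξ : ℝ} (hξ : 0 ≤ ξ) : (ξ ^ 2 - ξ) / 4 ≤ swerveG ξ := by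
  have h_exp : 1 + 2 * ξ + (2 * ξ) ^ 2 / 2 ≤ exp (2 * ξ) := quadratic_le_exp_of_nonneg (by linarith)
  have h_exp_neg : exp (-(2 * ξ)) ≤ 1 := exp_le_one_iff.2 (by linarith)
  unfold swerveG
  rw [sinh_eq]
  linarith

lemma cosh_mul_sinh_le_exp_two_mul (x : ℝ) : cosh x * sinh x ≤ exp (2 * x) / 4 := by
  have h : cosh x * sinh x = sinh (2 * x) / 2 := by rw [sinh_two_mul]; ring
  rw [h, sinh_eq]
  linarith [exp_pos (-(2 * x))]

lemma integrableOn_cosh_mul_sinh_mul_exp_neg_swerveG {c : ℝ} (hc : 0 < c) :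
    IntegrableOn (fun ξ => cosh ξ * sinh ξ * exp (-(c * swerveG ξ))) (Ioi 0) := by
  refine integrable_of_isBigO_exp_neg one_pos (by fun_prop) (IsBigO.of_bound 1 ?_)
  filter_upwards [eventually_ge_atTop (1 + 12 / c)] with ξ hξ
  have h12 : 12 ≤ c * (ξ - 1) := (div_le_iff₀' hc).1 (by linarith)
  have hξ1 : 1 ≤ ξ := by nlinarith
  have h_decay : 3 * ξ ≤ c * swerveG ξ := by
    have hg := mul_le_mul_of_nonneg_left (sq_sub_self_div_four_le_swerveG (by linarith)) hc.le
    nlinarith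
  have h_sinh : 0 ≤ sinh ξ := sinh_nonneg_iff.2 (by linarith)
  rw [norm_of_nonneg (by positivity), norm_of_nonneg (exp_pos _).le, one_mul]
  calc cosh ξ * sinh ξ * exp (-(c * swerveG ξ))
      ≤ exp (2 * ξ) / 4 * exp (-(3 * ξ)) := by
        gcongr
        exact cosh_mul_sinh_le_exp_two_mul ξ
    _ = exp (-1 * ξ) / 4 := by rw [div_mul_eq_mul_div, ← exp_add]; ring_nf
    _ ≤ exp (-1 * ξ) := by linarith [exp_pos (-1 * ξ)]

theorem swerves_expectation_tendsto_zero_general (τf m : ℝ) (hτf : 0 < τf) :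
    Tendsto (fun ρ : ℝ =>
        (4 * m ^ 2 / (3 * τf)) *
          ∫ ξ in Set.Ioi (0 : ℝ),
            Real.cosh ξ * Real.sinh ξ * Real.exp (-(ρ * π * τf ^ 4 * swerveG ξ)))
      atTop (nhds 0) := by
  have hc : 0 < π * τf ^ 4 := by positivity
  have h_integral := tendsto_integral_mul_exp_neg_mul_atTop (μ := volume.restrict (Ioi 0))
    (F := fun ξ => cosh ξ * sinh ξ) (G := fun ξ => π * τf ^ 4 * swerveG ξ)
    (by fun_prop) (by fun_prop)
    (ae_restrict_of_forall_mem measurableSet_Ioi fun ξ hξ => mul_pos hc (swerveG_pos hξ))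
    (integrableOn_cosh_mul_sinh_mul_exp_neg_swerveG hc)
  simpa [mul_assoc] using h_integral.const_mul (4 * m ^ 2 / (3 * τf))

/-- **Lemma 3.1** (swerves model): for fixed forgetting time `τf > 0` and mass `m > 0`, the
expectation value `E(ρ) = (4m²/(3τf)) ∫₀^∞ cosh ξ · sinh ξ · exp(−ρπτf⁴ g(ξ)) dξ` tends to `0`
as the sprinkling density `ρ → ∞`. -/
theorem swerves_expectation_tendsto_zero (τf m : ℝ) (hτf : 0 < τf) (hm : 0 < m) :
    Tendsto (fun ρ : ℝ =>
        (4 * m ^ 2 / (3 * τf)) *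
          ∫ ξ in Set.Ioi (0 : ℝ),
            Real.cosh ξ * Real.sinh ξ * Real.exp (-(ρ * π * τf ^ 4 * swerveG ξ)))
      atTop (nhds 0) :=
  swerves_expectation_tendsto_zero_general τf m hτf
end

section
/- For fixed sprinkling density ρ > 0 and fixed mass m > 0, the expectation value E(τ_f) = (4m²/(3τ_f)) ∫₀^∞ cosh(ξ)·sinh(ξ)·exp(−ρπτ_f⁴·g(ξ)) dξ tends to +∞ as the forgetting time τ_f tends to 0 from above. (Lemma 3.2: if the forgetting time τ_f → 0 with the discreteness scale fixed, the momentum diffusion expectation ⟨Δp Δp /(2Δτ)⟩ tends to infinity.) -/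
open MeasureTheory Filter Real

/-- Cubic lower bound on `sinh`. -/
lemma sinh_cubic_lb {x : ℝ} (hx : 0 ≤ x) : x / 2 + x ^ 2 / 4 + x ^ 3 / 12 ≤ Real.sinh x := by
  have h1 : 1 + x + x ^ 2 / 2 + x ^ 3 / 6 ≤ Real.exp x := by
    have := Real.sum_le_exp_of_nonneg hx 4
    simp [Finset.sum_range_succ, Nat.factorial] at this
    linarith
  have h2 : Real.exp (-x) ≤ 1 := Real.exp_le_one_iff.2 (by linarith)
  rw [Real.sinh_eq]
  linarith

lemma swerveG_nonneg {ξ : ℝ} (hξ : 0 ≤ ξ) : 0 ≤ swerveG ξ := by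
  have : (2 * ξ) ≤ Real.sinh (2 * ξ) := Real.self_le_sinh_iff.2 (by linarith)
  unfold swerveG; linarith

lemma swerveG_cubic_lb {ξ : ℝ} (hξ : 0 ≤ ξ) :
    ξ ^ 3 / 6 + ξ ^ 2 / 4 - ξ / 4 ≤ swerveG ξ := by
  have := sinh_cubic_lb (x := 2 * ξ) (by linarith)
  unfold swerveG
  nlinarith [this]

/-- Integrability of the swerves integrand for any positive decay rate `a`. -/
lemma swerves_integrand_integrable {a : ℝ} (ha : 0 < a) :
    IntegrableOn (fun ξ : ℝ => Real.cosh ξ * Real.sinh ξ * Real.exp (-(a * swerveG ξ)))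
      (Set.Ioi (0 : ℝ)) := by
  set f : ℝ → ℝ := fun ξ => Real.cosh ξ * Real.sinh ξ * Real.exp (-(a * swerveG ξ)) with hf
  have hcont : Continuous f := by
    unfold f; unfold swerveG; fun_prop
  set R : ℝ := 1 + Real.sqrt (18 / a + 3 / 2) with hR
  have hRnn : (0 : ℝ) ≤ R := by positivity
  have hRsq : 18 / a + 3 / 2 ≤ R ^ 2 := by
    have h1 : Real.sqrt (18 / a + 3 / 2) ^ 2 = 18 / a + 3 / 2 :=
      Real.sq_sqrt (by positivity)
    nlinarith [Real.sqrt_nonneg (18 / a + 3 / 2)]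
  have hunion : Set.Ioc (0 : ℝ) R ∪ Set.Ioi R = Set.Ioi (0 : ℝ) :=
    Set.Ioc_union_Ioi_eq_Ioi hRnn
  rw [← hunion]
  apply IntegrableOn.union
  · exact hcont.integrableOn_Ioc
  · -- tail: dominated by `exp (-ξ)`
    have hexp : IntegrableOn (fun x : ℝ => Real.exp (-1 * x)) (Set.Ioi R) :=
      exp_neg_integrableOn_Ioi R one_pos
    refine Integrable.mono hexp (hcont.aestronglyMeasurable.restrict) ?_
    refine (ae_restrict_iff' measurableSet_Ioi).2 (ae_of_all _ fun ξ hξ => ?_)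
    have hξR : R < ξ := hξ
    have hξ0 : (0 : ℝ) < ξ := lt_of_le_of_lt hRnn hξR
    -- key: a * swerveG ξ ≥ 3 ξ
    have hg : ξ ^ 3 / 6 + ξ ^ 2 / 4 - ξ / 4 ≤ swerveG ξ := swerveG_cubic_lb hξ0.le
    have hsq : 18 / a + 3 / 2 ≤ ξ ^ 2 := by
      have h2 := pow_le_pow_left₀ hRnn hξR.le 2
      exact hRsq.trans h2
    have hkey : 3 * ξ ≤ a * swerveG ξ := by
      have h1 : 18 / a * a = 18 := by field_simp
      nlinarith [mul_le_mul_of_nonneg_left hg ha.le, mul_le_mul_of_nonneg_left hsq ha.le]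
    -- bound f ξ ≤ exp(2ξ) * exp(-3ξ) = exp(-ξ)
    have hchsh : Real.cosh ξ * Real.sinh ξ ≤ Real.exp (2 * ξ) := by
      have hee : Real.exp (-ξ) ≤ Real.exp ξ := Real.exp_le_exp.2 (by linarith)
      have hc1 : Real.cosh ξ ≤ Real.exp ξ := by rw [Real.cosh_eq]; linarith
      have hs1 : Real.sinh ξ ≤ Real.exp ξ := by
        rw [Real.sinh_eq]
        have := Real.exp_pos (-ξ); have := Real.exp_pos ξ; linarith
      have h4 : 0 ≤ Real.sinh ξ := Real.sinh_nonneg_iff.2 hξ0.le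
      calc Real.cosh ξ * Real.sinh ξ ≤ Real.exp ξ * Real.exp ξ := by
            apply mul_le_mul hc1 hs1 h4 (Real.exp_pos _).le
        _ = Real.exp (2 * ξ) := by rw [← Real.exp_add]; ring_nf
    have hfnn : 0 ≤ f ξ := by
      unfold f
      have := Real.cosh_pos (x := ξ)
      have := Real.sinh_nonneg_iff.2 hξ0.le
      positivity
    rw [Real.norm_eq_abs, Real.norm_eq_abs, abs_of_nonneg hfnn,
      abs_of_nonneg (Real.exp_pos _).le]
    unfold f
    calc Real.cosh ξ * Real.sinh ξ * Real.exp (-(a * swerveG ξ))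
        ≤ Real.exp (2 * ξ) * Real.exp (-(3 * ξ)) := by
          apply mul_le_mul hchsh (Real.exp_le_exp.2 (by linarith)) (Real.exp_pos _).le
            (Real.exp_pos _).le
      _ = Real.exp (-1 * ξ) := by rw [← Real.exp_add]; ring_nf

/-- **Lemma 3.2** (swerves model): for fixed sprinkling density `ρ > 0` and mass `m > 0`, the
expectation value `E(τf) = (4m²/(3τf)) ∫₀^∞ cosh ξ · sinh ξ · exp(−ρπτf⁴ g(ξ)) dξ` tends to
`+∞` as the forgetting time `τf → 0⁺`. -/
theorem swerves_expectation_tendsto_atTop (ρ m : ℝ) (hρ : 0 < ρ) (hm : 0 < m) :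
    Tendsto (fun τf : ℝ =>
        (4 * m ^ 2 / (3 * τf)) *
          ∫ ξ in Set.Ioi (0 : ℝ),
            Real.cosh ξ * Real.sinh ξ * Real.exp (-(ρ * π * τf ^ 4 * swerveG ξ)))
      (nhdsWithin (0 : ℝ) (Set.Ioi 0)) atTop := by
  have hπ : (0 : ℝ) < π := Real.pi_pos
  set c : ℝ := Real.exp (-(ρ * π * (Real.sinh 2 / 4))) with hc
  have hcpos : 0 < c := Real.exp_pos _
  set K : ℝ := c * (Real.cosh 1 - 1) with hK
  have hcosh1 : 1 < Real.cosh 1 := by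
    rw [Real.one_lt_cosh]; norm_num
  have hKpos : 0 < K := by
    apply mul_pos hcpos; linarith
  -- base limit
  have hbase : Tendsto (fun τf : ℝ => 4 * m ^ 2 * K / 3 * τf⁻¹)
      (nhdsWithin (0 : ℝ) (Set.Ioi 0)) atTop :=
    Tendsto.const_mul_atTop (by positivity) tendsto_inv_nhdsGT_zero
  refine tendsto_atTop_mono' _ ?_ hbase
  filter_upwards [Ioo_mem_nhdsGT_of_mem (by norm_num : (0:ℝ) ∈ Set.Ico 0 1)]
    with τf hτf
  obtain ⟨hτ0, hτ1⟩ := hτf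
  set a : ℝ := ρ * π * τf ^ 4 with ha
  have hapos : 0 < a := by positivity
  have haρπ : a ≤ ρ * π := by
    have h1 : τf ^ 4 ≤ 1 := by nlinarith [sq_nonneg τf, sq_nonneg (τf^2), sq_nonneg (τf^2 - τf), sq_nonneg (1 - τf)]
    have := mul_le_mul_of_nonneg_left h1 (le_of_lt (mul_pos hρ hπ))
    rw [ha]; nlinarith
  set f : ℝ → ℝ := fun ξ => Real.cosh ξ * Real.sinh ξ * Real.exp (-(a * swerveG ξ)) with hf
  have hint : IntegrableOn f (Set.Ioi (0 : ℝ)) := swerves_integrand_integrable hapos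
  -- lower bound on the integral over Ioc 0 1
  have hsinh_int : IntegrableOn (fun ξ : ℝ => c * Real.sinh ξ) (Set.Ioc (0:ℝ) 1) :=
    (continuous_const.mul Real.continuous_sinh).integrableOn_Ioc
  have hmono : ∀ ξ ∈ Set.Ioc (0:ℝ) 1, c * Real.sinh ξ ≤ f ξ := by
    intro ξ hξ
    obtain ⟨hξ0, hξ1⟩ := hξ
    have hs : 0 ≤ Real.sinh ξ := Real.sinh_nonneg_iff.2 hξ0.le
    have hch : 1 ≤ Real.cosh ξ := Real.one_le_cosh ξ
    have hgub : swerveG ξ ≤ Real.sinh 2 / 4 := by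
      have h1 : Real.sinh (2 * ξ) ≤ Real.sinh 2 := Real.sinh_le_sinh.2 (by linarith)
      unfold swerveG; linarith
    have hgnn : 0 ≤ swerveG ξ := swerveG_nonneg hξ0.le
    have hcle : c ≤ Real.exp (-(a * swerveG ξ)) := by
      apply Real.exp_le_exp.2
      have h1 : a * swerveG ξ ≤ ρ * π * swerveG ξ :=
        mul_le_mul_of_nonneg_right haρπ hgnn
      have h2 : ρ * π * swerveG ξ ≤ ρ * π * (Real.sinh 2 / 4) :=
        mul_le_mul_of_nonneg_left hgub (by positivity)
      linarith
    calc c * Real.sinh ξ ≤ Real.exp (-(a * swerveG ξ)) * Real.sinh ξ :=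
          mul_le_mul_of_nonneg_right hcle hs
      _ ≤ Real.cosh ξ * Real.sinh ξ * Real.exp (-(a * swerveG ξ)) := by
          nlinarith [mul_nonneg (mul_nonneg (sub_nonneg.2 hch) hs) (Real.exp_pos (-(a * swerveG ξ))).le]
  have hIoc : ∫ ξ in Set.Ioc (0:ℝ) 1, c * Real.sinh ξ ≤ ∫ ξ in Set.Ioc (0:ℝ) 1, f ξ :=
    setIntegral_mono_on hsinh_int (hint.mono_set Set.Ioc_subset_Ioi_self)
      measurableSet_Ioc hmono
  have hval : ∫ ξ in Set.Ioc (0:ℝ) 1, c * Real.sinh ξ = K := by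
    rw [integral_const_mul, ← intervalIntegral.integral_of_le zero_le_one]
    have : ∫ ξ in (0:ℝ)..1, Real.sinh ξ = Real.cosh 1 - Real.cosh 0 :=
      intervalIntegral.integral_eq_sub_of_hasDerivAt
        (fun x _ => Real.hasDerivAt_cosh x)
        (Real.continuous_sinh.intervalIntegrable 0 1)
    rw [this, Real.cosh_zero, hK]
  have hfnn : 0 ≤ᵐ[volume.restrict (Set.Ioi (0:ℝ))] f := by
    refine (ae_restrict_iff' measurableSet_Ioi).2 (ae_of_all _ fun ξ hξ => ?_)
    have hξ0 : (0:ℝ) < ξ := hξ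
    have := Real.cosh_pos (x := ξ)
    have := Real.sinh_nonneg_iff.2 hξ0.le
    unfold f
    positivity
  have hIoi : ∫ ξ in Set.Ioc (0:ℝ) 1, f ξ ≤ ∫ ξ in Set.Ioi (0:ℝ), f ξ :=
    setIntegral_mono_set hint hfnn (HasSubset.Subset.eventuallyLE Set.Ioc_subset_Ioi_self)
  have hKle : K ≤ ∫ ξ in Set.Ioi (0:ℝ), f ξ := by
    rw [← hval]; exact le_trans hIoc hIoi
  -- conclude
  have hcoef : 0 < 4 * m ^ 2 / (3 * τf) := by positivity
  calc 4 * m ^ 2 * K / 3 * τf⁻¹ = (4 * m ^ 2 / (3 * τf)) * K := by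
        field_simp
    _ ≤ (4 * m ^ 2 / (3 * τf)) * ∫ ξ in Set.Ioi (0:ℝ), f ξ :=
        mul_le_mul_of_nonneg_left hKle hcoef.le
end

section
/- Let c > 0 and let ξ̄ ≥ 0 be such that cosh(ξ) ≤ 2·sinh(ξ) for all ξ ≥ ξ̄. Then the integral over [ξ̄,∞) of cosh(ξ)·sinh(ξ)·exp(−c·g(ξ)) dξ is at most (2/c)·exp(−c·g(ξ̄)), where g(ξ) = sinh(2ξ)/4 − ξ/2. -/
/-!
Whenever `g' ≥ 0` and `g → ∞`, the function `g' · exp (-c g)` has the antiderivative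
`-exp (-c g) / c`, which tends to `0`; hence its integral over `(ξ̄, ∞)` is
`exp (-c g(ξ̄)) / c`.
For `g = swerveG` we have `g' = sinh²`, and `cosh ≤ 2 sinh` bounds the integrand by
`2 sinh² · exp (-c g)`.
-/

open MeasureTheory Real

open Filter Set

section DerivMulExpNeg

variable {g g' : ℝ → ℝ} {a c : ℝ}

lemma hasDerivAt_neg_exp_neg_mul_div {x : ℝ} (hc : c ≠ 0) (hg : HasDerivAt g (g' x) x) :
    HasDerivAt (fun y => -(exp (-(c * g y)) / c)) (g' x * exp (-(c * g x))) x := by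
  refine ((hg.const_mul c).neg.exp.div_const c).neg.congr_deriv ?_
  field_simp
  exact mul_comm _ _

lemma tendsto_neg_exp_neg_mul_div_atTop (hc : 0 < c) (hg : Tendsto g atTop atTop) :
    Tendsto (fun y => -(exp (-(c * g y)) / c)) atTop (nhds 0) := by
  have hexp : Tendsto (fun y => exp (-(c * g y))) atTop (nhds 0) :=
    tendsto_exp_atBot.comp (tendsto_neg_atTop_atBot.comp (hg.const_mul_atTop hc))
  simpa using (hexp.div_const c).neg

lemma integrableOn_Ioi_deriv_mul_exp_neg_mul (hc : 0 < c)
    (hderiv : ∀ x ∈ Ici a, HasDerivAt g (g' x) x) (hg' : ∀ x ∈ Ioi a, 0 ≤ g' x)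
    (hg : Tendsto g atTop atTop) :
    IntegrableOn (fun x => g' x * exp (-(c * g x))) (Ioi a) :=
  integrableOn_Ioi_deriv_of_nonneg'
    (fun x hx => hasDerivAt_neg_exp_neg_mul_div hc.ne' (hderiv x hx))
    (fun x hx => mul_nonneg (hg' x hx) (exp_pos _).le) (tendsto_neg_exp_neg_mul_div_atTop hc hg)

lemma integral_Ioi_deriv_mul_exp_neg_mul (hc : 0 < c)
    (hderiv : ∀ x ∈ Ici a, HasDerivAt g (g' x) x) (hg' : ∀ x ∈ Ioi a, 0 ≤ g' x)
    (hg : Tendsto g atTop atTop) :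
    ∫ x in Ioi a, g' x * exp (-(c * g x)) = exp (-(c * g a)) / c := by
  rw [integral_Ioi_of_hasDerivAt_of_nonneg'
    (fun x hx => hasDerivAt_neg_exp_neg_mul_div hc.ne' (hderiv x hx))
    (fun x hx => mul_nonneg (hg' x hx) (exp_pos _).le) (tendsto_neg_exp_neg_mul_div_atTop hc hg)]
  ring

end DerivMulExpNeg

lemma hasDerivAt_swerveG (ξ : ℝ) : HasDerivAt swerveG (sinh ξ ^ 2) ξ := by
  have hsinh : HasDerivAt (fun x => sinh (2 * x)) (cosh (2 * ξ) * 2) ξ :=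
    (hasDerivAt_sinh (2 * ξ)).comp ξ ((hasDerivAt_id ξ).const_mul 2 |>.congr_deriv (mul_one 2))
  refine ((hsinh.div_const 4).sub ((hasDerivAt_id ξ).div_const 2)).congr_deriv ?_
  rw [cosh_two_mul, cosh_sq]
  ring

lemma mul_sub_one_div_four_le_swerveG {ξ : ℝ} (hξ : 0 ≤ ξ) :
    ξ * (ξ - 1) / 4 ≤ swerveG ξ := by
  have hexp : 1 + 2 * ξ + (2 * ξ) ^ 2 / 2 ≤ exp (2 * ξ) :=
    quadratic_le_exp_of_nonneg (by linarith)
  have hexp_neg : exp (-(2 * ξ)) ≤ 1 := exp_le_one_iff.mpr (by linarith)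
  rw [swerveG, sinh_eq]
  linarith

lemma tendsto_swerveG_atTop : Tendsto swerveG atTop atTop := by
  refine tendsto_atTop_mono' _ ?_ (tendsto_id.atTop_div_const (by norm_num : (0 : ℝ) < 4))
  filter_upwards [eventually_ge_atTop (2 : ℝ)] with ξ hξ
  calc ξ / 4 ≤ ξ * (ξ - 1) / 4 := by nlinarith
    _ ≤ swerveG ξ := mul_sub_one_div_four_le_swerveG (by linarith)

theorem integral_cosh_sinh_exp_neg_tail_le_general (c ξbar : ℝ) (hc : 0 < c)
    (h : ∀ ξ : ℝ, ξbar ≤ ξ → Real.cosh ξ ≤ 2 * Real.sinh ξ) :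
    (∫ ξ in Set.Ioi ξbar, Real.cosh ξ * Real.sinh ξ * Real.exp (-(c * swerveG ξ)))
      ≤ (2 / c) * Real.exp (-(c * swerveG ξbar)) := by
  have hsinh_pos : ∀ ξ ∈ Ioi ξbar, 0 < sinh ξ := fun ξ hξ => by
    linarith [cosh_pos ξ, h ξ hξ.le]
  have hderiv : ∀ ξ ∈ Ici ξbar, HasDerivAt swerveG (sinh ξ ^ 2) ξ :=
    fun ξ _ => hasDerivAt_swerveG ξ
  have hsq_nonneg : ∀ ξ ∈ Ioi ξbar, 0 ≤ sinh ξ ^ 2 := fun ξ _ => sq_nonneg _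
  calc (∫ ξ in Ioi ξbar, cosh ξ * sinh ξ * exp (-(c * swerveG ξ)))
      ≤ ∫ ξ in Ioi ξbar, 2 * (sinh ξ ^ 2 * exp (-(c * swerveG ξ))) := by
        refine setIntegral_mono_of_nonneg (fun ξ hξ => ?_) (fun ξ hξ => ?_)
          ((integrableOn_Ioi_deriv_mul_exp_neg_mul hc hderiv hsq_nonneg
            tendsto_swerveG_atTop).const_mul 2)
        all_goals have := hsinh_pos ξ hξ
        · positivity
        · calc cosh ξ * sinh ξ * exp (-(c * swerveG ξ))
              ≤ 2 * sinh ξ * sinh ξ * exp (-(c * swerveG ξ)) := by gcongr; exact h ξ hξ.le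
            _ = 2 * (sinh ξ ^ 2 * exp (-(c * swerveG ξ))) := by ring
    _ = 2 / c * exp (-(c * swerveG ξbar)) := by
        rw [integral_const_mul, integral_Ioi_deriv_mul_exp_neg_mul hc hderiv hsq_nonneg
          tendsto_swerveG_atTop]
        ring

/-- Tail estimate: if `c > 0` and `ξ̄ ≥ 0` is such that `cosh ξ ≤ 2·sinh ξ` for all `ξ ≥ ξ̄`,
then `∫_{ξ̄}^∞ cosh(ξ)·sinh(ξ)·exp(−c·g(ξ)) dξ ≤ (2/c)·exp(−c·g(ξ̄))`. -/
theorem integral_cosh_sinh_exp_neg_tail_le (c ξbar : ℝ) (hc : 0 < c) (hξbar : 0 ≤ ξbar)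
    (h : ∀ ξ : ℝ, ξbar ≤ ξ → Real.cosh ξ ≤ 2 * Real.sinh ξ) :
    (∫ ξ in Set.Ioi ξbar, Real.cosh ξ * Real.sinh ξ * Real.exp (-(c * swerveG ξ)))
      ≤ (2 / c) * Real.exp (-(c * swerveG ξbar)) :=
  integral_cosh_sinh_exp_neg_tail_le_general c ξbar hc h
end

section
/- Let k > 0, t > 0, m > 0 and T₀ > 0, and set T = T₀ + 2kt/m. Then for every p ∈ ℝ³, ∫_{ℝ³} (4πkt)^{−3/2}·exp(−‖p−q‖²/(4kt)) · (2πmT₀)^{−3/2}·exp(−‖q‖²/(2mT₀)) dq = (2πmT)^{−3/2}·exp(−‖p‖²/(2mT)). In particular, an initially thermal (Maxwell–Boltzmann) momentum distribution evolved by the heat kernel remains thermal, with temperature increasing at the rate dT/dt = 2k/m. -/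
/-!
The heat kernel at time `t` and the Maxwell–Boltzmann distribution at temperature `T` are the
centred isotropic Gaussian densities of variance `2kt` and `mT`. Completing the square in
`a‖p - q‖² + b‖q‖²` shows that variances add under convolution, so the evolved distribution is the
Gaussian of variance `mT₀ + 2kt = m (T₀ + 2kt/m)`.
-/

open Real MeasureTheory Module

section

variable {E : Type*} [NormedAddCommGroup E] [InnerProductSpace ℝ E]

theorem mul_norm_sub_sq_add_mul_norm_sq {a b : ℝ} (hab : a + b ≠ 0) (p q : E) :
    a * ‖p - q‖ ^ 2 + b * ‖q‖ ^ 2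
      = (a + b) * ‖q - (a / (a + b)) • p‖ ^ 2 + a * b / (a + b) * ‖p‖ ^ 2 := by
  rw [norm_sub_sq_real, norm_sub_sq_real, norm_smul, inner_smul_right, real_inner_comm,
    Real.norm_eq_abs, mul_pow, sq_abs]
  field_simp
  ring

end

variable {V : Type*} [NormedAddCommGroup V] [InnerProductSpace ℝ V] [FiniteDimensional ℝ V]
  [MeasurableSpace V] [BorelSpace V]

theorem integral_exp_neg_mul_norm_sub_sq_add_mul_norm_sq {a b : ℝ} (hab : 0 < a + b) (p : V) :
    ∫ q : V, exp (-(a * ‖p - q‖ ^ 2 + b * ‖q‖ ^ 2))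
      = (π / (a + b)) ^ (finrank ℝ V / 2 : ℝ) * exp (-(a * b / (a + b)) * ‖p‖ ^ 2) := by
  simp_rw [mul_norm_sub_sq_add_mul_norm_sq hab.ne', neg_add, exp_add, ← neg_mul]
  rw [integral_mul_const, integral_sub_right_eq_self (fun q => exp (-(a + b) * ‖q‖ ^ 2)),
    GaussianFourier.integral_rexp_neg_mul_sq_norm hab]

noncomputable def isotropicGaussianDensity (s : ℝ) (x : V) : ℝ :=
  (2 * π * s) ^ (-(finrank ℝ V : ℝ) / 2) * exp (-‖x‖ ^ 2 / (2 * s))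

theorem integral_isotropicGaussianDensity_sub_mul {s r : ℝ} (hs : 0 < s) (hr : 0 < r) (p : V) :
    ∫ q : V, isotropicGaussianDensity s (p - q) * isotropicGaussianDensity r q
      = isotropicGaussianDensity (s + r) p := by
  have hab : 0 < (2 * s)⁻¹ + (2 * r)⁻¹ := by positivity
  have hsum : ∀ q : V, isotropicGaussianDensity s (p - q) * isotropicGaussianDensity r q
      = ((2 * π * s) ^ (-(finrank ℝ V : ℝ) / 2) * (2 * π * r) ^ (-(finrank ℝ V : ℝ) / 2)) *
        exp (-((2 * s)⁻¹ * ‖p - q‖ ^ 2 + (2 * r)⁻¹ * ‖q‖ ^ 2)) := by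
    intro q
    rw [isotropicGaussianDensity, isotropicGaussianDensity, mul_mul_mul_comm, ← exp_add]
    ring_nf
  have hvar : π / ((2 * s)⁻¹ + (2 * r)⁻¹) = 2 * π * s * (2 * π * r) / (2 * π * (s + r)) := by
    field_simp; ring
  have hrate : (2 * s)⁻¹ * (2 * r)⁻¹ / ((2 * s)⁻¹ + (2 * r)⁻¹) = (2 * (s + r))⁻¹ := by
    field_simp; ring
  have hnorm : (2 * π * s) ^ (-(finrank ℝ V : ℝ) / 2) * (2 * π * r) ^ (-(finrank ℝ V : ℝ) / 2) *
      (π / ((2 * s)⁻¹ + (2 * r)⁻¹)) ^ (finrank ℝ V / 2 : ℝ)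
        = (2 * π * (s + r)) ^ (-(finrank ℝ V : ℝ) / 2) := by
    rw [hvar, div_rpow (by positivity) (by positivity),
      mul_rpow (x := 2 * π * s) (by positivity) (by positivity), neg_div,
      rpow_neg (x := 2 * π * s) (by positivity), rpow_neg (x := 2 * π * r) (by positivity),
      rpow_neg (x := 2 * π * (s + r)) (by positivity)]
    have : 0 < (2 * π * s) ^ (finrank ℝ V / 2 : ℝ) := by positivity
    have : 0 < (2 * π * r) ^ (finrank ℝ V / 2 : ℝ) := by positivity
    field_simp
  simp_rw [hsum]
  rw [integral_const_mul, integral_exp_neg_mul_norm_sub_sq_add_mul_norm_sq hab, ← mul_assoc, hnorm,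
    hrate, isotropicGaussianDensity]
  ring_nf

/-- Heat-kernel evolution of a Maxwell–Boltzmann distribution: with `T = T₀ + 2kt/m`,
`∫_{ℝ³} (4πkt)^{−3/2} e^{−‖p−q‖²/(4kt)} · (2πmT₀)^{−3/2} e^{−‖q‖²/(2mT₀)} dq
 = (2πmT)^{−3/2} e^{−‖p‖²/(2mT)}`, so a thermal distribution stays thermal with
temperature increasing at rate `2k/m`. -/
theorem heat_kernel_maxwellBoltzmann (k t m T₀ : ℝ) (hk : 0 < k) (ht : 0 < t)
    (hm : 0 < m) (hT₀ : 0 < T₀) (p : EuclideanSpace ℝ (Fin 3)) :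
    ∫ q : EuclideanSpace ℝ (Fin 3),
        (4 * π * k * t) ^ (-(3 : ℝ) / 2) * Real.exp (-‖p - q‖ ^ 2 / (4 * k * t)) *
          ((2 * π * m * T₀) ^ (-(3 : ℝ) / 2) * Real.exp (-‖q‖ ^ 2 / (2 * m * T₀)))
      = (2 * π * m * (T₀ + 2 * k * t / m)) ^ (-(3 : ℝ) / 2) *
          Real.exp (-‖p‖ ^ 2 / (2 * m * (T₀ + 2 * k * t / m))) := by
  have heat_kernel (x : EuclideanSpace ℝ (Fin 3)) :
      (4 * π * k * t) ^ (-(3 : ℝ) / 2) * exp (-‖x‖ ^ 2 / (4 * k * t))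
        = isotropicGaussianDensity (2 * k * t) x := by
    simp only [isotropicGaussianDensity, finrank_euclideanSpace_fin]
    ring_nf
  have maxwellBoltzmann (T : ℝ) (x : EuclideanSpace ℝ (Fin 3)) :
      (2 * π * m * T) ^ (-(3 : ℝ) / 2) * exp (-‖x‖ ^ 2 / (2 * m * T))
        = isotropicGaussianDensity (m * T) x := by
    simp only [isotropicGaussianDensity, finrank_euclideanSpace_fin]
    ring_nf
  simp_rw [heat_kernel, maxwellBoltzmann]
  rw [integral_isotropicGaussianDensity_sub_mul (by positivity) (by positivity)]
  congr 1
  field_simp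
  ring
end
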